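/- Let Σ be a symmetric positive definite solution of the algebraic Riccati equation Σ Aᵀ + A Σ + Σ Q Σ - B R⁻¹ Bᵀ - C (Iₙ + Σ N)⁻¹ Σ Cᵀ = 0, where Q, N are symmetric positive definite and R is symmetric positive definite. Define A_Σ = -(A + ΣQ)ᵀ and C_Σ = -[C(Iₙ + ΣN)⁻¹]ᵀ. Then Σ A_Σ + A_Σᵀ Σ + C_Σᵀ Σ C_Σ = -(Σ Q Σ + B R⁻¹ Bᵀ + C(Iₙ+ΣN)⁻¹ Σ N Σ (Iₙ+NΣ)⁻¹ Cᵀ), which is negative definite. -/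

import Mathlib

set_option maxHeartbeats 1000000


open Matrix

lemma posDef_conj_aux {n : ℕ} {A B : Matrix (Fin n) (Fin n) ℝ}
    (hA : A.PosDef) (hB : IsUnit B.det) : (B * A * Bᵀ).PosDef := by
  have h1 : (B * A * Bᵀ).PosSemidef := by
    have := hA.posSemidef.mul_mul_conjTranspose_same B
    rwa [conjTranspose_eq_transpose_of_trivial] at this
  refine PosDef.of_dotProduct_mulVec_pos h1.1 (fun x hx => ?_)
  have hy : Bᵀ *ᵥ x ≠ 0 := by
    intro h
    apply hx
    have hdet : IsUnit (Bᵀ).det := by rwa [det_transpose]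
    have := congrArg (fun v => (Bᵀ)⁻¹ *ᵥ v) h
    simpa [mulVec_mulVec, nonsing_inv_mul _ hdet] using this
  have key : x ⬝ᵥ ((B * A * Bᵀ) *ᵥ x) = (Bᵀ *ᵥ x) ⬝ᵥ (A *ᵥ (Bᵀ *ᵥ x)) := by
    rw [Matrix.mul_assoc, ← mulVec_mulVec, ← mulVec_mulVec, dotProduct_mulVec,
      ← mulVec_transpose]
  have := hA.dotProduct_mulVec_pos hy
  simp only [star_trivial] at this ⊢
  rwa [key]

theorem lyapunov_identity_negdef {n m : ℕ}
    (A C N Q S : Matrix (Fin n) (Fin n) ℝ)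
    (B : Matrix (Fin n) (Fin m) ℝ) (R : Matrix (Fin m) (Fin m) ℝ)
    (hQ : Q.PosDef) (hN : N.PosDef) (hR : R.PosDef) (hS : S.PosDef)
    (hSN : IsUnit (1 + S * N).det)
    (hARE : S * Aᵀ + A * S + S * Q * S - B * R⁻¹ * Bᵀ - C * (1 + S * N)⁻¹ * S * Cᵀ = 0)
    (ASig CSig : Matrix (Fin n) (Fin n) ℝ)
    (hASig : ASig = -(A + S * Q)ᵀ) (hCSig : CSig = -(C * (1 + S * N)⁻¹)ᵀ) :
    S * ASig + ASigᵀ * S + CSigᵀ * S * CSig =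
      -(S * Q * S + B * R⁻¹ * Bᵀ + C * (1 + S * N)⁻¹ * S * N * S * (1 + N * S)⁻¹ * Cᵀ) ∧
    (S * Q * S + B * R⁻¹ * Bᵀ + C * (1 + S * N)⁻¹ * S * N * S * (1 + N * S)⁻¹ * Cᵀ).PosDef := by
  have hSt : Sᵀ = S := by
    rw [← conjTranspose_eq_transpose_of_trivial]; exact hS.1
  have hQt : Qᵀ = Q := by
    rw [← conjTranspose_eq_transpose_of_trivial]; exact hQ.1
  have hNt : Nᵀ = N := by
    rw [← conjTranspose_eq_transpose_of_trivial]; exact hN.1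
  have htr : (1 + S * N)ᵀ = 1 + N * S := by
    rw [transpose_add, transpose_mul, hSt, hNt, transpose_one]
  have hdet : IsUnit (1 + N * S).det := by
    rw [← htr, det_transpose]; exact hSN
  have hT : ((1 + S * N)⁻¹)ᵀ = (1 + N * S)⁻¹ := by
    rw [transpose_nonsing_inv, htr]
  have hT2 : ((1 + N * S)⁻¹)ᵀ = (1 + S * N)⁻¹ := by
    rw [← hT, transpose_transpose]
  have h0 : (S + S * N * S) * (1 + N * S)⁻¹ = S := by
    have h' : S * (1 + N * S) = S + S * N * S := by noncomm_ring
    rw [← h', mul_nonsing_inv_cancel_right _ _ hdet]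
  have hKey : C * (1 + S * N)⁻¹ * ((S + S * N * S) * (1 + N * S)⁻¹) * Cᵀ
      = C * (1 + S * N)⁻¹ * S * Cᵀ := by rw [h0, Matrix.mul_assoc]
  constructor
  · subst hASig hCSig
    simp only [transpose_neg, transpose_transpose, transpose_add, transpose_mul,
      hSt, hQt, hNt, hT, hT2]
    linear_combination (norm := noncomm_ring) hKey - hARE
  · have hSQS : (S * Q * S).PosDef := by
      have := posDef_conj_aux hQ ((Matrix.isUnit_iff_isUnit_det S).mp hS.isUnit)
      rwa [hSt] at this
    have hBRB : (B * R⁻¹ * Bᵀ).PosSemidef := by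
      have := (hR.inv).posSemidef.mul_mul_conjTranspose_same B
      rwa [conjTranspose_eq_transpose_of_trivial] at this
    have hC3 : (C * (1 + S * N)⁻¹ * S * N * S * (1 + N * S)⁻¹ * Cᵀ).PosSemidef := by
      have := hN.posSemidef.mul_mul_conjTranspose_same (C * (1 + S * N)⁻¹ * S)
      rw [conjTranspose_eq_transpose_of_trivial, transpose_mul, transpose_mul,
        hSt, hT] at this
      have heq : C * (1 + S * N)⁻¹ * S * N * (S * ((1 + N * S)⁻¹ * Cᵀ))
          = C * (1 + S * N)⁻¹ * S * N * S * (1 + N * S)⁻¹ * Cᵀ := by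
        noncomm_ring
      rwa [heq] at this
    exact (hSQS.add_posSemidef hBRB).add_posSemidef hC3
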